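/- Let α, β be inner functions, k ≥ 1, and φ ∈ L²(𝕋). If φ ∈ conj(αH²) + (W_k*β)H², i.e., φ = conj(α h₁) + β(z^k)·h₂ with h₁, h₂ ∈ H², then the compression U_φ^{α,β} f = P_β W_k(φ f) vanishes on K_α ∩ H^∞, i.e., U_φ^{α,β} = 0. -/

import Mathlib

open MeasureTheory Complex

noncomputable section

instance : Fact ((0:ℝ) < 1) := ⟨one_pos⟩

/-- The unit circle 𝕋, realized additively. -/
abbrev Circ := AddCircle (1:ℝ)
/-- Normalized Haar (Lebesgue) measure on the circle. -/
abbrev μc : Measure Circ := AddCircle.haarAddCircle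
/-- The Lebesgue space L²(𝕋). -/
abbrev L2 := Lp ℂ 2 μc

/-- The basis element "z^n" of L²(𝕋). -/
def e (n : ℤ) : L2 := fourierLp 2 n

/-- The Hardy space H², the closed span of the nonnegative powers of z. -/
def H2 : Submodule ℂ L2 :=
  (Submodule.span ℂ (Set.range fun n : ℕ => e n)).topologicalClosure

/-- The family θ·z^n, n ≥ 0, whose closed span is (the closure of) θH² for inner θ. -/
def thetaSet (θ : Circ → ℂ) : Set L2 :=
  {g | ∃ n : ℕ, ⇑g =ᵐ[μc] fun x => θ x * fourier n x}

/-- The model space K_θ = H² ⊖ θH². -/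
def Kmodel (θ : Circ → ℂ) : Submodule ℂ L2 :=
  H2 ⊓ (Submodule.span ℂ (thetaSet θ))ᗮ

theorem Kmodel_isClosed (θ : Circ → ℂ) : IsClosed (Kmodel θ : Set L2) := by
  have h1 : IsClosed (H2 : Set L2) := Submodule.isClosed_topologicalClosure _
  have h2 : IsClosed ((Submodule.span ℂ (thetaSet θ))ᗮ : Set L2) :=
    Submodule.isClosed_orthogonal _
  have h3 : (Kmodel θ : Set L2) = (H2 : Set L2) ∩ ((Submodule.span ℂ (thetaSet θ))ᗮ : Set L2) := rfl
  rw [h3]; exact h1.inter h2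

instance (θ : Circ → ℂ) : CompleteSpace (Kmodel θ) :=
  (Kmodel_isClosed θ).completeSpace_coe

instance : CompleteSpace H2 :=
  (Submodule.isClosed_topologicalClosure _).completeSpace_coe

/-- The Riesz projection onto H², as an operator on L². -/
def PH2 : L2 →L[ℂ] L2 := H2.subtypeL.comp (Submodule.orthogonalProjection H2)

/-- The orthogonal projection P_θ onto the model space K_θ, as an operator on L². -/
def Pmod (θ : Circ → ℂ) : L2 →L[ℂ] L2 :=
  (Kmodel θ).subtypeL.comp (Submodule.orthogonalProjection (Kmodel θ))

/-- The rank-one operator (u ⊗ v) f = ⟨f, v⟩ u (inner product linear in f). -/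
def rankOne (u v : L2) : L2 →L[ℂ] L2 :=
  (ContinuousLinearMap.toSpanSingleton ℂ u).comp (innerSL ℂ v)

/-- θ is (the boundary function of) an inner function: essentially bounded, of modulus
one a.e., with vanishing negative Fourier coefficients. -/
def IsInnerFun (θ : Circ → ℂ) : Prop :=
  MemLp θ ⊤ μc ∧ (∀ᵐ x ∂μc, ‖θ x‖ = 1) ∧
    ∀ n : ℤ, n < 0 → ∫ x, θ x * (starRingEnd ℂ) (fourier n x) ∂μc = 0

/-- The kernel functions k_{0,j}^θ = P_θ(j! z^j). -/
def kker (θ : Circ → ℂ) (j : ℕ) : L2 := Pmod θ ((j.factorial : ℂ) • e j)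

/-- The compressed shift S_θ = P_θ M_z P_θ (as an operator on L², vanishing on K_θᗮ),
built from the multiplication-by-z operator Mz. -/
def Smod (θ : Circ → ℂ) (Mz : L2 →L[ℂ] L2) : L2 →L[ℂ] L2 :=
  (Pmod θ).comp (Mz.comp (Pmod θ))

/-- W is the k-th order slant shift W_k : z^n ↦ z^(n/k) if k ∣ n, else 0. -/
def IsSlantShift (k : ℕ) (W : L2 →L[ℂ] L2) : Prop :=
  ∀ n : ℤ, W (e n) = if (k:ℤ) ∣ n then e (n / k) else 0

/-- Mz is the multiplication by z on L². -/
def IsMz (Mz : L2 →L[ℂ] L2) : Prop :=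
  ∀ f : L2, ⇑(Mz f) =ᵐ[μc] fun x => fourier 1 x * f x

/-- U agrees with the compression U_φ^{α,β} = P_β W_k(φ ·) on K_α^∞ = K_α ∩ H^∞. -/
def UphiRel (W : L2 →L[ℂ] L2) (α β : Circ → ℂ) (φ : Circ → ℂ) (U : L2 →L[ℂ] L2) : Prop :=
  ∀ f : L2, f ∈ Kmodel α → MemLp (⇑f) ⊤ μc →
    ∀ g : L2, (⇑g =ᵐ[μc] fun x => φ x * f x) → U f = Pmod β (W g)

/-- U belongs to 𝒮_k(α,β): it is a bounded extension of some U_φ^{α,β}, φ ∈ L². -/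
def InSk (W : L2 →L[ℂ] L2) (α β : Circ → ℂ) (U : L2 →L[ℂ] L2) : Prop :=
  ∃ φ : Circ → ℂ, MemLp φ 2 μc ∧ UphiRel W α β φ U

/-- Sstar acts as the backward shift on H²: S* f = P(conj z · f). -/
def IsBackwardShift (Sstar : L2 →L[ℂ] L2) : Prop :=
  ∀ f : L2, f ∈ H2 → ∀ g : L2,
    (⇑g =ᵐ[μc] fun x => (starRingEnd ℂ) (fourier 1 x) * f x) → Sstar f = PH2 g

/-- C is the conjugation C_θ f = θ · conj(z f) on L². -/
def IsConjOp (θ : Circ → ℂ) (C : L2 → L2) : Prop :=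
  ∀ f : L2, ⇑(C f) =ᵐ[μc] fun x => θ x * (starRingEnd ℂ) (fourier 1 x * f x)
section Aux


/-! Split `φ f = conj (α h₁) f + β(z^k) h₂ f`. The first summand is orthogonal to `H²`: for
`n ≥ 0` its `n`-th Fourier coefficient is `⟪α z^n h₁, f⟫ = 0`, as `f ⊥ αH²`. The slant shift
`W_k` is the adjoint of `V : u ↦ u(z^k)`, and `V` maps `H²` into itself, so `W_k` preserves
`H²ᗮ` and the first summand contributes nothing against `K_β ⊆ H²`. For the second, if
`u ∈ K_β` then `⟪u, W_k (β(z^k) h₂ f)⟫ = ⟪V (conj β u), h₂ f⟫ = ⟪conj β u, W_k (h₂ f)⟫ = 0`,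
because `conj β u ⊥ H²` (as `u ⊥ βH²`) while `h₂ f ∈ H²` and `W_k` preserves `H²`. -/

open scoped InnerProductSpace ComplexConjugate

open Submodule

lemma coeFn_e (n : ℤ) : ⇑(e n) =ᵐ[μc] fun x => fourier n x := coeFn_fourierLp 2 n

lemma inner_e_e (m n : ℤ) : ⟪e m, e n⟫_ℂ = if m = n then 1 else 0 :=
  orthonormal_iff_ite.mp orthonormal_fourier m n

lemma inner_eq_integral {x y : L2} {F G : Circ → ℂ} (hx : ⇑x =ᵐ[μc] F) (hy : ⇑y =ᵐ[μc] G) :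
    ⟪x, y⟫_ℂ = ∫ a, conj (F a) * G a ∂μc := by
  rw [MeasureTheory.L2.inner_def]
  refine integral_congr_ae ?_
  filter_upwards [hx, hy] with a hxa hya
  rw [RCLike.inner_apply, hxa, hya, mul_comm]

lemma continuousLinearMap_ext_e {E : Type*} [TopologicalSpace E] [AddCommMonoid E] [Module ℂ E]
    [T2Space E] {T S : L2 →L[ℂ] E} (h : ∀ n, T (e n) = S (e n)) : T = S :=
  ContinuousLinearMap.ext_on
    (dense_iff_topologicalClosure_eq_top.mpr (span_fourierLp_closure_eq_top (by norm_num)))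
    (by rintro _ ⟨n, rfl⟩; exact h n)

lemma e_mem_H2 (n : ℕ) : e n ∈ H2 :=
  le_topologicalClosure _ (subset_span ⟨n, rfl⟩)

lemma isClosed_H2 : IsClosed (H2 : Set L2) := isClosed_topologicalClosure _

lemma apply_mem_of_mem_H2 {T : L2 →L[ℂ] L2} {K : Submodule ℂ L2} (hK : IsClosed (K : Set L2))
    (hT : ∀ n : ℕ, T (e n) ∈ K) {x : L2} (hx : x ∈ H2) : T x ∈ K :=
  topologicalClosure_minimal (span ℂ _) (t := K.comap T.toLinearMap)
    ((span_le (p := K.comap T.toLinearMap)).mpr (by rintro _ ⟨n, rfl⟩; exact hT n))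
    (hK.preimage T.continuous) hx

lemma mem_orthogonal_H2_iff {x : L2} : x ∈ H2ᗮ ↔ ∀ n : ℕ, ⟪e n, x⟫_ℂ = 0 := by
  refine ⟨fun hx n => inner_right_of_mem_orthogonal (e_mem_H2 n) hx, fun h => ?_⟩
  rw [H2, orthogonal_closure, mem_orthogonal']
  exact fun u hu => (span_le (p := LinearMap.ker (innerₛₗ ℂ x))).mpr
    (by rintro _ ⟨n, rfl⟩; exact inner_eq_zero_symm.mp (h n)) hu

def mulL {ψ : Circ → ℂ} (hψ : MemLp ψ ⊤ μc) : L2 →L[ℂ] L2 :=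
  (ContinuousLinearMap.mul ℂ ℂ).holderL μc ⊤ 2 2 (hψ.toLp ψ)

lemma coeFn_mulL {ψ : Circ → ℂ} (hψ : MemLp ψ ⊤ μc) (x : L2) :
    ⇑(mulL hψ x) =ᵐ[μc] fun a => ψ a * x a := by
  filter_upwards [(ContinuousLinearMap.mul ℂ ℂ).coeFn_holder (r := 2) (hψ.toLp ψ) x,
    hψ.coeFn_toLp] with a ha hψa
  rw [mulL, ContinuousLinearMap.holderL_apply_apply, ha, hψa]
  rfl

lemma inner_mulL_left {ψ : Circ → ℂ} (hψ : MemLp ψ ⊤ μc) (x y : L2) :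
    ⟪mulL hψ x, y⟫_ℂ = ⟪x, mulL hψ.star y⟫_ℂ := by
  rw [inner_eq_integral (coeFn_mulL hψ x) (.refl _ _),
    inner_eq_integral (.refl _ _) (coeFn_mulL hψ.star y)]
  simp only [Pi.star_apply, RCLike.star_def, map_mul]
  exact integral_congr_ae (.of_forall fun a => by ring)

lemma memLp_fourier (n : ℤ) : MemLp (fun x : Circ => fourier n x) ⊤ μc :=
  memLp_top_of_bound (fourier n).continuous.aestronglyMeasurable 1
    (.of_forall fun _ => (Circle.norm_coe _).le)

lemma mulL_fourier_e (m n : ℤ) : mulL (memLp_fourier m) (e n) = e (m + n) := by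
  refine Lp.ext ?_
  filter_upwards [coeFn_mulL (memLp_fourier m) (e n), coeFn_e n, coeFn_e (m + n)]
    with x h1 h2 h3
  rw [h1, h2, h3, fourier_add]

lemma mulL_fourier_mem_H2 (n : ℕ) {x : L2} (hx : x ∈ H2) : mulL (memLp_fourier n) x ∈ H2 :=
  apply_mem_of_mem_H2 isClosed_H2 (fun m => by
    rw [mulL_fourier_e]; exact_mod_cast e_mem_H2 (n + m)) hx

lemma mulL_e {f : L2} (hf : MemLp (⇑f) ⊤ μc) (n : ℤ) :
    mulL hf (e n) = mulL (memLp_fourier n) f := by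
  refine Lp.ext ?_
  filter_upwards [coeFn_mulL hf (e n), coeFn_mulL (memLp_fourier n) f, coeFn_e n]
    with x h1 h2 h3
  rw [h1, h2, h3, mul_comm]

lemma mulL_mem_H2 {f : L2} (hf : f ∈ H2) (hfb : MemLp (⇑f) ⊤ μc) {x : L2} (hx : x ∈ H2) :
    mulL hfb x ∈ H2 :=
  apply_mem_of_mem_H2 isClosed_H2 (fun n => by
    rw [mulL_e]; exact mulL_fourier_mem_H2 n hf) hx

lemma mulL_e_mem_thetaSet {θ : Circ → ℂ} (hθ : MemLp θ ⊤ μc) (n : ℕ) :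
    mulL hθ (e n) ∈ thetaSet θ :=
  ⟨n, by filter_upwards [coeFn_mulL hθ (e n), coeFn_e n] with x h1 h2; rw [h1, h2]⟩

lemma inner_mulL_eq_zero_of_mem_Kmodel {θ : Circ → ℂ} (hθ : MemLp θ ⊤ μc) {h f : L2}
    (hh : h ∈ H2) (hf : f ∈ Kmodel θ) : ⟪mulL hθ h, f⟫_ℂ = 0 := by
  have hθh : mulL hθ h ∈ (span ℂ (thetaSet θ)).topologicalClosure :=
    apply_mem_of_mem_H2 (isClosed_topologicalClosure _)
      (fun n => le_topologicalClosure _ (subset_span (mulL_e_mem_thetaSet hθ n))) hh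
  refine inner_right_of_mem_orthogonal hθh ?_
  rw [orthogonal_closure]
  exact hf.2

lemma mulL_star_mem_orthogonal_H2 {θ : Circ → ℂ} (hθ : MemLp θ ⊤ μc) {u : L2}
    (hu : u ∈ Kmodel θ) : mulL hθ.star u ∈ H2ᗮ :=
  mem_orthogonal_H2_iff.mpr fun n => by
    rw [← inner_mulL_left hθ]
    exact inner_right_of_mem_orthogonal (subset_span (mulL_e_mem_thetaSet hθ n)) hu.2

lemma IsSlantShift.apply_mem_H2 {k : ℕ} {W : L2 →L[ℂ] L2} (hW : IsSlantShift k W) {x : L2}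
    (hx : x ∈ H2) : W x ∈ H2 :=
  apply_mem_of_mem_H2 isClosed_H2 (fun n => by
    rw [hW n]
    split_ifs
    · rw [← Int.natCast_div]; exact e_mem_H2 _
    · exact zero_mem _) hx

section SlantShift

variable (k : ℕ) [NeZero k]

lemma measurePreserving_zsmul_circ : MeasurePreserving (fun x : Circ => (k : ℤ) • x) μc μc :=
  Measure.measurePreserving_zsmul μc (by exact_mod_cast NeZero.ne k)

def compZPow : L2 →L[ℂ] L2 :=
  (Lp.compMeasurePreservingₗᵢ ℂ _ (measurePreserving_zsmul_circ k)).toContinuousLinearMap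

lemma coeFn_compZPow (x : L2) : ⇑(compZPow k x) =ᵐ[μc] fun a => x ((k : ℤ) • a) :=
  Lp.coeFn_compMeasurePreserving x (measurePreserving_zsmul_circ k)

lemma compZPow_e (m : ℤ) : compZPow k (e m) = e (k * m) := by
  refine Lp.ext ?_
  have hm := (measurePreserving_zsmul_circ k).quasiMeasurePreserving.ae_eq_comp (coeFn_e m)
  simp only [Function.comp_def] at hm
  filter_upwards [coeFn_compZPow k (e m), hm, coeFn_e (k * m)] with x h1 h2 h3
  rw [h1, h2, h3, fourier_apply, fourier_apply, smul_smul, mul_comm]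

variable {k} {W : L2 →L[ℂ] L2}

lemma IsSlantShift.inner_e_left (hW : IsSlantShift k W) (n : ℤ) (y : L2) :
    ⟪W (e n), y⟫_ℂ = ⟪e n, compZPow k y⟫_ℂ := by
  have hk : (k : ℤ) ≠ 0 := by exact_mod_cast NeZero.ne k
  refine congrArg (fun T : L2 →L[ℂ] ℂ => T y)
    (continuousLinearMap_ext_e (T := innerSL ℂ (W (e n)))
      (S := (innerSL ℂ (e n)).comp (compZPow k)) fun m => ?_)
  simp only [innerSL_apply_apply, ContinuousLinearMap.comp_apply, compZPow_e, hW n]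
  by_cases hkn : (k : ℤ) ∣ n
  · obtain ⟨c, rfl⟩ := hkn
    rw [if_pos (dvd_mul_right _ _), Int.mul_ediv_cancel_left _ hk, inner_e_e, inner_e_e]
    simp only [mul_right_inj' hk]
  · rw [if_neg hkn, inner_zero_left, inner_e_e, if_neg]
    rintro rfl
    exact hkn (dvd_mul_right _ _)

lemma IsSlantShift.eq_adjoint (hW : IsSlantShift k W) :
    W = ContinuousLinearMap.adjoint (compZPow k) := by
  refine (ContinuousLinearMap.eq_adjoint_iff _ _).mpr fun x y => ?_
  rw [← inner_conj_symm, ← inner_conj_symm x]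
  refine congrArg conj (congrArg (fun T : L2 →L[ℂ] ℂ => T x)
    (continuousLinearMap_ext_e (T := (innerSL ℂ y).comp W) (S := innerSL ℂ (compZPow k y))
      fun n => ?_))
  simp only [innerSL_apply_apply, ContinuousLinearMap.comp_apply]
  rw [← inner_conj_symm, hW.inner_e_left, inner_conj_symm]

lemma IsSlantShift.inner_apply_right (hW : IsSlantShift k W) (x y : L2) :
    ⟪x, W y⟫_ℂ = ⟪compZPow k x, y⟫_ℂ := by
  rw [hW.eq_adjoint, ContinuousLinearMap.adjoint_inner_right]

lemma IsSlantShift.apply_mem_orthogonal_H2 (hW : IsSlantShift k W) {x : L2} (hx : x ∈ H2ᗮ) :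
    W x ∈ H2ᗮ :=
  mem_orthogonal_H2_iff.mpr fun n => by
    rw [hW.inner_apply_right, compZPow_e]
    exact_mod_cast mem_orthogonal_H2_iff.mp hx (k * n)

end SlantShift

lemma conj_mul_mem_orthogonal_H2 {α : Circ → ℂ} (hα : MemLp α ⊤ μc) {h f g : L2} (hh : h ∈ H2)
    (hf : f ∈ Kmodel α) (hg : ⇑g =ᵐ[μc] fun x => conj (α x * h x) * f x) : g ∈ H2ᗮ :=
  mem_orthogonal_H2_iff.mpr fun n => by
    have hαh : ⇑(mulL hα (mulL (memLp_fourier n) h)) =ᵐ[μc]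
        fun x => α x * (fourier n x * h x) := by
      filter_upwards [coeFn_mulL hα (mulL (memLp_fourier n) h), coeFn_mulL (memLp_fourier n) h]
        with x h1 h2
      rw [h1, h2]
    calc ⟪e n, g⟫_ℂ = ⟪mulL hα (mulL (memLp_fourier n) h), f⟫_ℂ := by
          rw [inner_eq_integral (coeFn_e n) hg, inner_eq_integral hαh (.refl _ _)]
          refine integral_congr_ae (.of_forall fun x => ?_)
          simp only [map_mul]
          ring
      _ = 0 := inner_mulL_eq_zero_of_mem_Kmodel hα (mulL_fourier_mem_H2 n hh) hf

lemma IsSlantShift.inner_apply_eq_zero_of_mem_Kmodel {k : ℕ} [NeZero k] {W : L2 →L[ℂ] L2}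
    (hW : IsSlantShift k W) {β : Circ → ℂ} (hβ : MemLp β ⊤ μc) {h u g : L2} (hh : h ∈ H2)
    (hu : u ∈ Kmodel β) (hg : ⇑g =ᵐ[μc] fun x => β ((k : ℤ) • x) * h x) :
    ⟪u, W g⟫_ℂ = 0 := by
  set q := mulL hβ.star u
  have hq := (measurePreserving_zsmul_circ k).quasiMeasurePreserving.ae_eq_comp
    (coeFn_mulL hβ.star u)
  simp only [Function.comp_def, Pi.star_apply, RCLike.star_def] at hq
  calc ⟪u, W g⟫_ℂ = ⟪compZPow k u, g⟫_ℂ := hW.inner_apply_right u g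
    _ = ⟪compZPow k q, h⟫_ℂ := by
        rw [inner_eq_integral (coeFn_compZPow k u) hg,
          inner_eq_integral ((coeFn_compZPow k q).trans hq) (.refl _ _)]
        refine integral_congr_ae (.of_forall fun x => ?_)
        simp only [map_mul, conj_conj]
        ring
    _ = ⟪q, W h⟫_ℂ := (hW.inner_apply_right q h).symm
    _ = 0 :=
      inner_left_of_mem_orthogonal (hW.apply_mem_H2 hh) (mulL_star_mem_orthogonal_H2 hβ hu)

lemma Pmod_eq_zero_iff {θ : Circ → ℂ} {x : L2} : Pmod θ x = 0 ↔ x ∈ (Kmodel θ)ᗮ := by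
  rw [Pmod, ContinuousLinearMap.comp_apply, Submodule.subtypeL_apply, ZeroMemClass.coe_eq_zero,
    orthogonalProjectionOnto_eq_zero_iff]

theorem symbol_zero_operator_general (k : ℕ) (hk : 1 ≤ k) (α β : Circ → ℂ)
    (hα : IsInnerFun α) (hβ : IsInnerFun β)
    (W : L2 →L[ℂ] L2) (hW : IsSlantShift k W)
    (φ : Circ → ℂ)
    (h₁ h₂ : L2) (hh₁ : h₁ ∈ H2) (hh₂ : h₂ ∈ H2)
    (hrep : φ =ᵐ[μc] fun x => (starRingEnd ℂ) (α x * h₁ x) + β ((k : ℤ) • x) * h₂ x)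
    (f : L2) (hf : f ∈ Kmodel α) (hfb : MemLp (⇑f) ⊤ μc)
    (g : L2) (hg : ⇑g =ᵐ[μc] fun x => φ x * f x) :
    Pmod β (W g) = 0 := by
  have : NeZero k := ⟨by omega⟩
  have hβk : MemLp (fun x : Circ => β ((k : ℤ) • x)) ⊤ μc :=
    hβ.1.comp_measurePreserving (measurePreserving_zsmul_circ k)
  set g₂ := mulL hβk (mulL hfb h₂)
  have hg₁ : ⇑(g - g₂) =ᵐ[μc] fun x => conj (α x * h₁ x) * f x := by
    filter_upwards [Lp.coeFn_sub g g₂, hg, hrep, coeFn_mulL hβk (mulL hfb h₂),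
      coeFn_mulL hfb h₂] with x h1 h2 h3 h4 h5
    rw [h1, Pi.sub_apply, h2, h3, h4, h5]
    ring
  refine Pmod_eq_zero_iff.mpr fun u hu => ?_
  rw [← sub_add_cancel g g₂, map_add, inner_add_right,
    inner_right_of_mem_orthogonal hu.1
      (hW.apply_mem_orthogonal_H2 (conj_mul_mem_orthogonal_H2 hα.1 hh₁ hf hg₁)),
    hW.inner_apply_eq_zero_of_mem_Kmodel hβ.1 (mulL_mem_H2 hf.1 hfb hh₂) hu
      (coeFn_mulL hβk _), add_zero]

/-- if φ = conj(α h₁) + β(z^k) h₂ with h₁, h₂ ∈ H², then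
U_φ^{α,β} f = P_β W_k(φ f) = 0 for every f ∈ K_α ∩ H^∞. -/
theorem symbol_zero_operator (k : ℕ) (hk : 1 ≤ k) (α β : Circ → ℂ)
    (hα : IsInnerFun α) (hβ : IsInnerFun β)
    (W : L2 →L[ℂ] L2) (hW : IsSlantShift k W)
    (φ : Circ → ℂ) (hφ : MemLp φ 2 μc)
    (h₁ h₂ : L2) (hh₁ : h₁ ∈ H2) (hh₂ : h₂ ∈ H2)
    (hrep : φ =ᵐ[μc] fun x => (starRingEnd ℂ) (α x * h₁ x) + β ((k : ℤ) • x) * h₂ x)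
    (f : L2) (hf : f ∈ Kmodel α) (hfb : MemLp (⇑f) ⊤ μc)
    (g : L2) (hg : ⇑g =ᵐ[μc] fun x => φ x * f x) :
    Pmod β (W g) = 0 :=
  symbol_zero_operator_general k hk α β hα hβ W hW φ h₁ h₂ hh₁ hh₂ hrep f hf hfb g hg
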